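/- In the max-plus semiring, if v is an eigenvector of A with eigenvalue λ (i.e., max_j (A_{ij} + v_j) = λ + v_i for all i, with all v_i finite), then for any cycle i_1 → i_2 → ... → i_k → i_1 in the graph of A, the cycle mean (A_{i_1 i_2} + ... + A_{i_k i_1})/k is at most λ. -/

import Mathlib

/-! Each edge `i → j` of weight `a` satisfies `a + v j ≤ λ + v i`, since `a + v j` is one of the
terms of the maximum defining `λ + v i`. Summing this around a cycle, the potential terms `v`
cancel, leaving `∑ a ≤ k λ`. -/

open Finset

theorem Matrix.maxPlus_entry_add_le_of_eigen {ι : Type*} [Fintype ι]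
    {A : Matrix ι ι (WithBot ℝ)} {lam : ℝ} {v : ι → ℝ} {i : ι}
    (hi : (univ.sup fun j => A i j + (v j : WithBot ℝ)) = ((lam + v i : ℝ) : WithBot ℝ))
    (j : ι) {a : ℝ} (ha : A i j = a) : a + v j ≤ lam + v i := by
  have hle : A i j + (v j : WithBot ℝ) ≤ ((lam + v i : ℝ) : WithBot ℝ) :=
    hi ▸ le_sup (f := fun j => A i j + (v j : WithBot ℝ)) (mem_univ j)
  rwa [ha, ← WithBot.coe_add, WithBot.coe_le_coe] at hle

theorem cycle_mean_le_of_potential {k : ℕ} [NeZero k] {w u : Fin k → ℝ} {lam : ℝ}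
    (h : ∀ t, w t + u (t + 1) ≤ lam + u t) : (∑ t, w t) / k ≤ lam := by
  have hsum : ∑ t, (w t + u (t + 1)) ≤ ∑ t, (lam + u t) := sum_le_sum fun t _ => h t
  have hshift : ∑ t, u (t + 1) = ∑ t, u t := Equiv.sum_comp (Equiv.addRight (1 : Fin k)) u
  rw [sum_add_distrib, sum_add_distrib, hshift, add_le_add_iff_right, sum_const, card_univ,
    Fintype.card_fin, nsmul_eq_mul] at hsum
  rwa [div_le_iff₀ (Nat.cast_pos.mpr (Nat.pos_of_neZero k)), mul_comm]

/-- In max-plus, if `v` is a finite eigenvector of `A` with eigenvalue `λ`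
(`max_j (A i j + v j) = λ + v i` for all `i`), then every cycle
`c 0 → c 1 → ... → c (k-1) → c 0` in the graph of `A` (with real edge weights `w`)
has cycle mean at most `λ`. -/
theorem stmt15 {n : ℕ} (A : Matrix (Fin n) (Fin n) (WithBot ℝ))
    (lam : ℝ) (v : Fin n → ℝ)
    (heig : ∀ i, (Finset.univ.sup fun j => A i j + (v j : WithBot ℝ))
        = ((lam + v i : ℝ) : WithBot ℝ))
    (k : ℕ) [NeZero k] (c : Fin k → Fin n) (w : Fin k → ℝ)
    (hw : ∀ t : Fin k, A (c t) (c (t + 1)) = (w t : WithBot ℝ)) :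
    (∑ t, w t) / k ≤ lam :=
  cycle_mean_le_of_potential (u := v ∘ c) fun t =>
    Matrix.maxPlus_entry_add_le_of_eigen (heig (c t)) (c (t + 1)) (hw t)
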